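/- Let ε be a multiplication factor such that either the future →P is a line for every P ∈ F, or the past ←P is a line for every P ∈ F. Then (O_F, 1, ε) is a composition algebra. -/
import Mathlib


open Finset

/-- The ambient `𝔽₂`-vector space (the Fano cube); the Fano plane `F` is its set of
nonzero vectors. -/
abbrev V : Type := Fin 3 → ZMod 2

/-- A multiplication factor: a sign `ε P Q ∈ {−1,1}` for each ordered pair `(P,Q)` of
distinct points of the Fano plane with `ε Q P = −ε P Q`, normalised to `0` outside its
domain of definition. -/
def IsMulFactor (ε : V → V → ℤ) : Prop :=
  (∀ P Q : V, P ≠ 0 → Q ≠ 0 → P ≠ Q → (ε P Q = 1 ∨ ε P Q = -1) ∧ ε Q P = -ε P Q) ∧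
  (∀ P Q : V, P = 0 ∨ Q = 0 ∨ P = Q → ε P Q = 0)

/-- A norm on the Fano plane: a map to `{−1,1}` multiplicative on pairs of distinct points. -/
def IsNorm (N : V → ℤ) : Prop :=
  (∀ P : V, P ≠ 0 → N P = 1 ∨ N P = -1) ∧
  (∀ P Q : V, P ≠ 0 → Q ≠ 0 → P ≠ Q → N (P + Q) = N P * N Q)

/-- A line of the Fano plane: a 3-element set `{P,Q,R}` of nonzero vectors with `P+Q+R=0`. -/
def IsLine (L : Set V) : Prop :=
  ∃ P Q R : V, P ≠ 0 ∧ Q ≠ 0 ∧ R ≠ 0 ∧ P ≠ Q ∧ P ≠ R ∧ Q ≠ R ∧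
    P + Q + R = 0 ∧ L = {P, Q, R}

/-- A triangle: a 3-element subset of the Fano plane which is not a line. -/
def IsTriangle (T : Set V) : Prop :=
  ∃ P Q R : V, P ≠ 0 ∧ Q ≠ 0 ∧ R ≠ 0 ∧ P ≠ Q ∧ P ≠ R ∧ Q ≠ R ∧
    P + Q + R ≠ 0 ∧ T = {P, Q, R}

/-- A quadrilateral: a 4-element subset of the Fano plane containing no line. -/
def IsQuad (S : Set V) : Prop :=
  (∃ P Q R T : V, P ≠ 0 ∧ Q ≠ 0 ∧ R ≠ 0 ∧ T ≠ 0 ∧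
    P ≠ Q ∧ P ≠ R ∧ P ≠ T ∧ Q ≠ R ∧ Q ≠ T ∧ R ≠ T ∧ S = {P, Q, R, T}) ∧
  (∀ L : Set V, IsLine L → ¬ L ⊆ S)

/-- The future of a point `P`: the points `Q` of the Fano plane with `ε P Q = 1`. -/
def Future (ε : V → V → ℤ) (P : V) : Set V := {Q : V | Q ≠ 0 ∧ Q ≠ P ∧ ε P Q = 1}

/-- The past of a point `P`: the points `Q` of the Fano plane with `ε P Q = −1`. -/
def Past (ε : V → V → ℤ) (P : V) : Set V := {Q : V | Q ≠ 0 ∧ Q ≠ P ∧ ε P Q = -1}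

/-- The composition conditions (C1) and (C2) on a multiplication factor. -/
def CompCond (ε : V → V → ℤ) : Prop :=
  (∀ P Q R : V, P ≠ 0 → Q ≠ 0 → R ≠ 0 → P ≠ Q → P ≠ R → Q ≠ R → P + Q + R = 0 →
    ε P Q * ε Q R = 1) ∧
  (∀ P Q R S : V, P ≠ 0 → Q ≠ 0 → R ≠ 0 → S ≠ 0 →
    P ≠ Q → P ≠ R → P ≠ S → Q ≠ R → Q ≠ S → R ≠ S → IsQuad {P, Q, R, S} →
    ε P Q * ε Q R * ε R S * ε S P = -1)

/-- An oriented triangle `{P,Q,R}`: one with `ε P Q = ε Q R = ε R P`. -/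
def OrientedTri (ε : V → V → ℤ) (T : Set V) : Prop :=
  ∃ P Q R : V, T = {P, Q, R} ∧ P ≠ Q ∧ P ≠ R ∧ Q ≠ R ∧
    ε P Q = ε Q R ∧ ε Q R = ε R P

/-- `P` is the distinguished point of the quadrilateral `S`: the point of `S` whose
complement in `S` is the oriented triangle of `S`. -/
def IsDistPt (ε : V → V → ℤ) (S : Set V) (P : V) : Prop :=
  P ∈ S ∧ IsTriangle (S \ {P}) ∧ OrientedTri ε (S \ {P})

/-- A family of subsets of the Fano plane satisfies the Fano axioms if two distinct points
lie in exactly one member and two distinct members meet in exactly one point. -/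
def FanoFamily (Δ : Set (Set V)) : Prop :=
  (∀ P Q : V, P ≠ 0 → Q ≠ 0 → P ≠ Q → ∃! T, T ∈ Δ ∧ P ∈ T ∧ Q ∈ T) ∧
  (∀ T₁ T₂ : Set V, T₁ ∈ Δ → T₂ ∈ Δ → T₁ ≠ T₂ → ∃! X : V, X ∈ T₁ ∩ T₂)

/-- An `n`-oriented map: `α_P(P) + n(P) = 1` on the Fano plane and
`α_P(Q) + α_Q(P) = 1` for distinct points; normalised by `α 0 = 0`. -/
def IsNOrientedMap (n : V →ₗ[ZMod 2] ZMod 2) (α : V → V →ₗ[ZMod 2] ZMod 2) : Prop :=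
  (∀ P : V, P ≠ 0 → α P P + n P = 1) ∧
  (∀ P Q : V, P ≠ 0 → Q ≠ 0 → P ≠ Q → α P Q + α Q P = 1) ∧
  α 0 = 0

/-- An oriented map is a `0`-oriented map. -/
def IsOrientedMap (α : V → V →ₗ[ZMod 2] ZMod 2) : Prop := IsNOrientedMap 0 α

/-- The exponential `e : ZMod 2 → {−1,1}`, `e^0 = 1`, `e^1 = −1`. -/
def eSign (x : ZMod 2) : ℤ := if x = 0 then 1 else -1

/-- The multiplication factor `e^α` associated to an (`n`-)oriented map `α`. -/
def expMap (α : V → V →ₗ[ZMod 2] ZMod 2) : V → V → ℤ :=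
  fun P Q => if P ≠ 0 ∧ Q ≠ 0 ∧ P ≠ Q then eSign (α P Q) else 0

/-- The set `Δ_P = {Q ∈ F : Q ≠ P, α_P(Q) = 1}` associated to an oriented map. -/
def DeltaSet (α : V → V →ₗ[ZMod 2] ZMod 2) (P : V) : Set V :=
  {Q : V | Q ≠ 0 ∧ Q ≠ P ∧ α P Q = 1}

/-- The map `α ↦ α′`, `α′_P = α_P + n(P)·n`. -/
def nTransform (n : V →ₗ[ZMod 2] ZMod 2) (α : V → V →ₗ[ZMod 2] ZMod 2) :
    V → V →ₗ[ZMod 2] ZMod 2 :=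
  fun P => α P + n P • n

/-- The norm `e^{n}` on the Fano plane associated to a linear form `n`. -/
def NormOf (n : V →ₗ[ZMod 2] ZMod 2) : V → ℤ := fun P => eSign (n P)

/-- Structure constants of the octonion-type multiplication on `O_F` determined by a norm `N`
and a multiplication factor `ε`: `e_0` is a two-sided unit, `e_P ⬝ e_P = −N(P) e_0` and
`e_P ⬝ e_Q = ε_{PQ} e_{P+Q}` for distinct points `P`, `Q` of the Fano plane. -/
def structC (𝔽 : Type*) [Field 𝔽] (N : V → ℤ) (ε : V → V → ℤ) (P Q : V) : 𝔽 :=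
  if P = 0 ∨ Q = 0 then 1
  else if P = Q then -(N P : 𝔽)
  else (ε P Q : 𝔽)

/-- The bilinear multiplication on `O_F = (V → 𝔽)` with the above structure constants
(in `V` we have `X = Y + Z ↔ Z = X + Y`). -/
def octMul (𝔽 : Type*) [Field 𝔽] (N : V → ℤ) (ε : V → V → ℤ) (Z W : V → 𝔽) : V → 𝔽 :=
  fun X => ∑ Y : V, structC 𝔽 N ε Y (X + Y) * Z Y * W (X + Y)

/-- The quadratic form `N_O` on `O_F`. -/
def octNorm (𝔽 : Type*) [Field 𝔽] (N : V → ℤ) (Z : V → 𝔽) : 𝔽 :=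
  ∑ X : V, (if X = 0 then 1 else (N X : 𝔽)) * Z X ^ 2

/-- `(O_F, N, ε)` is a composition algebra: `N_O(Z ⬝ W) = N_O(Z) N_O(W)`. -/
def IsCompAlg (𝔽 : Type*) [Field 𝔽] (N : V → ℤ) (ε : V → V → ℤ) : Prop :=
  ∀ Z W : V → 𝔽, octNorm 𝔽 N (octMul 𝔽 N ε Z W) = octNorm 𝔽 N Z * octNorm 𝔽 N W

section Aux

lemma vadd_self (v : V) : v + v = 0 := by
  funext i
  have : ∀ x : ZMod 2, x + x = 0 := by decide
  exact this _

lemma vadd_left_self (a b : V) : a + (b + a) = b := by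
  rw [add_comm b a, ← add_assoc, vadd_self, zero_add]

set_option synthInstance.maxSize 10000 in
set_option maxHeartbeats 4000000 in
theorem factL : ∀ B C P Q : V, B ≠ 0 → C ≠ 0 → B ≠ C →
    P ≠ 0 → Q ≠ 0 → P ≠ Q → B ≠ P → B ≠ Q → B ≠ P + Q →
    ((C = P ∨ C = Q ∨ C = P + Q) ↔ ¬(B + C = P ∨ B + C = Q ∨ B + C = P + Q)) := by
  decide

set_option synthInstance.maxSize 10000 in
set_option maxHeartbeats 40000000 in
theorem factQ : ∀ A B C P Q : V, A ≠ 0 → B ≠ 0 → C ≠ 0 → A + B + C ≠ 0 →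
    A ≠ B → A ≠ C → B ≠ C →
    P ≠ 0 → Q ≠ 0 → P ≠ Q → A ≠ P → A ≠ Q → A ≠ P + Q →
    (((C = P ∨ C = Q ∨ C = P + Q) ↔
        ¬(A + B + C = P ∨ A + B + C = Q ∨ A + B + C = P + Q)) ↔
      (B = P ∨ B = Q ∨ B = P + Q)) := by
  decide

variable {ε : V → V → ℤ}

lemma eps_antisym (hε : IsMulFactor ε) (P Q : V) : ε Q P = -ε P Q := by
  by_cases hP : P = 0
  · rw [hε.2 Q P (Or.inr (Or.inl hP)), hε.2 P Q (Or.inl hP)]; ring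
  by_cases hQ : Q = 0
  · rw [hε.2 Q P (Or.inl hQ), hε.2 P Q (Or.inr (Or.inl hQ))]; ring
  by_cases hPQ : P = Q
  · rw [hε.2 Q P (Or.inr (Or.inr hPQ.symm)), hε.2 P Q (Or.inr (Or.inr hPQ))]; ring
  exact (hε.1 P Q hP hQ hPQ).2

/-- Membership in a future, given as a set of three points. -/
lemma future_mem_iff (hε : IsMulFactor ε) {A P Q R : V} (hset : Future ε A = {P, Q, R})
    {X : V} (hX : X ≠ 0) (hXA : X ≠ A) :
    (X = P ∨ X = Q ∨ X = R) ↔ ε A X = 1 := by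
  have := Set.ext_iff.1 hset X
  simp only [Future, Set.mem_setOf_eq, Set.mem_insert_iff, Set.mem_singleton_iff] at this
  rw [← this]
  exact ⟨fun h => h.2.2, fun h => ⟨hX, hXA, h⟩⟩

lemma future_avoids (hε : IsMulFactor ε) {A P Q R : V} (hset : Future ε A = {P, Q, R}) :
    A ≠ P ∧ A ≠ Q ∧ A ≠ R := by
  have hP : P ∈ Future ε A := by rw [hset]; simp
  have hQ : Q ∈ Future ε A := by rw [hset]; simp
  have hR : R ∈ Future ε A := by rw [hset]; simp
  exact ⟨fun h => hP.2.1 h.symm, fun h => hQ.2.1 h.symm, fun h => hR.2.1 h.symm⟩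

/-- Condition (C1) in additive form. -/
lemma K1_of_futures (hε : IsMulFactor ε) (hfut : ∀ P : V, P ≠ 0 → IsLine (Future ε P)) :
    ∀ B C D : V, B ≠ 0 → C ≠ 0 → D ≠ 0 → B ≠ C → B ≠ D → C ≠ D → B + C + D = 0 →
      ε B C + ε B D = 0 := by
  intro B C D hB hC hD hBC hBD hCD hsum
  have hD' : B + C = D := add_right_cancel (a := B + C) (b := D) (c := D)
    (by rw [hsum, vadd_self])
  obtain ⟨P, Q, R, hP, hQ, hR, hPQ, hPR, hQR, hsum2, hset⟩ := hfut B hB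
  have hR' : P + Q = R := add_right_cancel (a := P + Q) (b := R) (c := R)
    (by rw [hsum2, vadd_self])
  obtain ⟨hBP, hBQ, hBR⟩ := future_avoids hε hset
  have hiff := factL B C P Q hB hC hBC hP hQ hPQ hBP hBQ (hR' ▸ hBR)
  rw [hR', hD'] at hiff
  rw [future_mem_iff hε hset hC (Ne.symm hBC), future_mem_iff hε hset hD (Ne.symm hBD)] at hiff
  have hv1 := (hε.1 B C hB hC hBC).1
  have hv2 := (hε.1 B D hB hD hBD).1
  omega

/-- Condition (C2) in additive form. -/
lemma K2_of_futures (hε : IsMulFactor ε) (hfut : ∀ P : V, P ≠ 0 → IsLine (Future ε P)) :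
    ∀ A B C D : V, A ≠ 0 → B ≠ 0 → C ≠ 0 → D ≠ 0 →
      A ≠ B → A ≠ C → A ≠ D → B ≠ C → B ≠ D → C ≠ D → A + C = B + D →
      ε A C * ε B D + ε A D * ε B C = 0 := by
  intro A B C D hA hB hC hD hAB hAC hAD hBC hBD hCD hsum
  have hD' : A + B + C = D := by
    have h1 : B + (B + D) = D := by rw [← add_assoc, vadd_self, zero_add]
    rw [← hsum] at h1
    rw [← h1]; abel
  have hD2 : B + A + C = D := by rw [← hD']; ring_nf
  obtain ⟨P, Q, R, hP, hQ, hR, hPQ, hPR, hQR, hsumA, hsetA⟩ := hfut A hA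
  have hRA : P + Q = R := add_right_cancel (a := P + Q) (b := R) (c := R)
    (by rw [hsumA, vadd_self])
  obtain ⟨P', Q', R', hP', hQ', hR'0, hPQ', hPR', hQR', hsumB, hsetB⟩ := hfut B hB
  have hRB : P' + Q' = R' := add_right_cancel (a := P' + Q') (b := R') (c := R')
    (by rw [hsumB, vadd_self])
  obtain ⟨hAP, hAQ, hAR⟩ := future_avoids hε hsetA
  obtain ⟨hBP', hBQ', hBR'⟩ := future_avoids hε hsetB
  have hDne : A + B + C ≠ 0 := by rw [hD']; exact hD
  have hDne2 : B + A + C ≠ 0 := by rw [hD2]; exact hD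
  have hiffA := factQ A B C P Q hA hB hC hDne hAB hAC hBC hP hQ hPQ hAP hAQ (hRA ▸ hAR)
  have hiffB := factQ B A C P' Q' hB hA hC hDne2 (Ne.symm hAB) hBC hAC hP' hQ' hPQ'
    hBP' hBQ' (hRB ▸ hBR')
  rw [hRA, hD'] at hiffA
  rw [hRB, hD2] at hiffB
  rw [future_mem_iff hε hsetA hC (Ne.symm hAC), future_mem_iff hε hsetA hD (Ne.symm hAD),
    future_mem_iff hε hsetA hB (Ne.symm hAB)] at hiffA
  rw [future_mem_iff hε hsetB hC (Ne.symm hBC), future_mem_iff hε hsetB hD (Ne.symm hBD),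
    future_mem_iff hε hsetB hA hAB] at hiffB
  have hanti : ε B A = -ε A B := eps_antisym hε A B
  have hv5 := (hε.1 A B hA hB hAB).1
  rcases (hε.1 A C hA hC hAC).1 with h1 | h1 <;>
    rcases (hε.1 A D hA hD hAD).1 with h2 | h2 <;>
      rcases (hε.1 B C hB hC hBC).1 with h3 | h3 <;>
        rcases (hε.1 B D hB hD hBD).1 with h4 | h4 <;>
          rw [h1, h2] at hiffA <;> rw [h3, h4] at hiffB <;>
            rw [h1, h2, h3, h4] <;> omega

end Aux

section Aux2

lemma vzero : ∀ a b : V, a + b = 0 → a = b := by decide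
lemma vcancel : ∀ a b : V, a = a + b → b = 0 := by decide
lemma vcancel' : ∀ a b : V, a = b + a → b = 0 := by decide
lemma vswap : ∀ a b c d : V, a + c = b + d → a + d = b + c := by decide
lemma vl : ∀ a b c : V, a = b + c →
    b + a + c = 0 ∧ a + b + c = 0 ∧ b + c + a = 0 ∧ c + a + b = 0 ∧
    c + b + a = 0 ∧ a + c + b = 0 := by decide
lemma vsum : ∀ y x : V, y + (x + y) = x := by decide
lemma vfour : ∀ x y z : V, x + y + z + y = x + z := by decide
lemma vfive : ∀ x y z : V, x + y + z + y + z = x := by decide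
lemma vne3 : ∀ x y z : V, x + y + z = x → y = z := by decide

variable {𝔽 : Type*} [Field 𝔽] {ε : V → V → ℤ}

lemma structC_zero_left (N : V → ℤ) (Q : V) : structC 𝔽 N ε 0 Q = 1 := by
  simp [structC]

lemma structC_zero_right (N : V → ℤ) (P : V) : structC 𝔽 N ε P 0 = 1 := by
  simp [structC]

lemma structC_same (N : V → ℤ) {P : V} (h : P ≠ 0) : structC 𝔽 N ε P P = -(N P : 𝔽) := by
  simp [structC, h]

lemma structC_ne {N : V → ℤ} {P Q : V} (h1 : P ≠ 0) (h2 : Q ≠ 0) (h3 : P ≠ Q) :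
    structC 𝔽 N ε P Q = (ε P Q : 𝔽) := by
  simp [structC, h1, h2, h3]

/-- The key cancellation property of the structure constants. -/
lemma keyC (hε : IsMulFactor ε)
    (hK1 : ∀ B C D : V, B ≠ 0 → C ≠ 0 → D ≠ 0 → B ≠ C → B ≠ D → C ≠ D → B + C + D = 0 →
      ε B C + ε B D = 0)
    (hK2 : ∀ A B C D : V, A ≠ 0 → B ≠ 0 → C ≠ 0 → D ≠ 0 →
      A ≠ B → A ≠ C → A ≠ D → B ≠ C → B ≠ D → C ≠ D → A + C = B + D →
      ε A C * ε B D + ε A D * ε B C = 0) :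
    ∀ A B C D : V, A ≠ B → A + C = B + D →
      structC 𝔽 (fun _ => 1) ε A C * structC 𝔽 (fun _ => 1) ε B D +
        structC 𝔽 (fun _ => 1) ε A D * structC 𝔽 (fun _ => 1) ε B C = 0 := by
  intro A B C D hAB hsum
  have hsum' : A + D = B + C := vswap A B C D hsum
  have hCD : C ≠ D := fun h => hAB (add_right_cancel (h ▸ hsum))
  by_cases hA : A = 0
  · subst hA
    have hB : B ≠ 0 := Ne.symm hAB
    rw [zero_add] at hsum
    by_cases hC : C = 0
    · subst hC
      obtain rfl : B = D := vzero B D hsum.symm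
      simp only [structC_zero_left, structC_zero_right, structC_same _ hB]
      norm_num
    by_cases hD : D = 0
    · subst hD
      rw [add_zero] at hsum; subst hsum
      simp only [structC_zero_left, structC_zero_right, structC_same _ hB]
      norm_num
    · have hBC : B ≠ C := fun h => hD (vcancel B D (h ▸ hsum))
      have hBD : B ≠ D := fun h => hC (by rw [hsum, ← h, vadd_self])
      have hK := hK1 B C D hB hC hD hBC hBD hCD (vl C B D hsum).1
      rw [structC_zero_left, structC_zero_left, structC_ne hB hD hBD,
        structC_ne hB hC hBC]
      have h' : ε B D + ε B C = 0 := by omega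
      calc (1:𝔽) * (ε B D : 𝔽) + 1 * (ε B C : 𝔽) = ((ε B D + ε B C : ℤ) : 𝔽) := by
            push_cast; ring
        _ = 0 := by rw [h']; norm_num
  by_cases hB : B = 0
  · subst hB
    rw [zero_add] at hsum
    by_cases hC : C = 0
    · subst hC
      rw [add_zero] at hsum; subst hsum
      simp only [structC_zero_left, structC_zero_right, structC_same _ hA]
      norm_num
    by_cases hD : D = 0
    · subst hD
      obtain rfl : A = C := vzero A C hsum
      simp only [structC_zero_left, structC_zero_right, structC_same _ hA]
      norm_num
    · have hAC : A ≠ C := fun h => hD (by rw [← hsum, h]; exact vadd_self C)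
      have hAD : A ≠ D := fun h => hC (vcancel A C (by rw [hsum, h]))
      have hK := hK1 A C D hA hC hD hAC hAD hCD (vl D A C hsum.symm).2.2.1
      rw [structC_zero_left, structC_ne hA hC hAC, structC_ne hA hD hAD]
      have h' : ε A C + ε A D = 0 := by omega
      calc (ε A C : 𝔽) * 1 + (ε A D : 𝔽) * 1 = ((ε A C + ε A D : ℤ) : 𝔽) := by
            push_cast; ring
        _ = 0 := by rw [h']; norm_num
  by_cases hC : C = 0
  · subst hC
    rw [add_zero] at hsum
    have hD : D ≠ 0 := by
      intro h; subst h; rw [add_zero] at hsum; exact hAB hsum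
    have hAD : A ≠ D := fun h => hB (vcancel' A B (by rw [← h] at hsum; exact hsum))
    have hBD : B ≠ D := fun h => hA (by rw [hsum, ← h, vadd_self])
    have hDA : D ≠ A := Ne.symm hAD
    have hDB : D ≠ B := Ne.symm hBD
    have hK := hK1 D A B hD hA hB hDA hDB hAB (vl A B D hsum).2.2.2.1
    rw [structC_zero_right, structC_zero_right, structC_ne hB hD hBD,
      structC_ne hA hD hAD]
    have ha1 : ε A D = -ε D A := by
      have := eps_antisym hε D A; omega
    have ha2 : ε B D = -ε D B := by
      have := eps_antisym hε D B; omega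
    have h' : ε B D + ε A D = 0 := by omega
    calc (1:𝔽) * (ε B D : 𝔽) + (ε A D : 𝔽) * 1 = ((ε B D + ε A D : ℤ) : 𝔽) := by
          push_cast; ring
      _ = 0 := by rw [h']; norm_num
  by_cases hD : D = 0
  · subst hD
    rw [add_zero] at hsum
    have hAC : A ≠ C := fun h => hB (by rw [← hsum, ← h, vadd_self])
    have hBC : B ≠ C := fun h => hA (vcancel' C A (by rw [h] at hsum; exact hsum.symm))
    have hCA : C ≠ A := Ne.symm hAC
    have hCB : C ≠ B := Ne.symm hBC
    have hK := hK1 C A B hC hA hB hCA hCB hAB (vl B A C hsum.symm).2.2.2.2.1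
    rw [structC_zero_right, structC_zero_right, structC_ne hA hC hAC,
      structC_ne hB hC hBC]
    have ha1 : ε A C = -ε C A := by
      have := eps_antisym hε C A; omega
    have ha2 : ε B C = -ε C B := by
      have := eps_antisym hε C B; omega
    have h' : ε A C + ε B C = 0 := by omega
    calc (ε A C : 𝔽) * 1 + 1 * (ε B C : 𝔽) = ((ε A C + ε B C : ℤ) : 𝔽) := by
          push_cast; ring
      _ = 0 := by rw [h']; norm_num
  -- now A, B, C, D all nonzero
  by_cases hAC : A = C
  · subst hAC
    obtain rfl : B = D := by
      have h0 : A + A = 0 := vadd_self A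
      rw [h0] at hsum
      exact vzero B D hsum.symm
    rw [structC_same _ hA, structC_same _ hB, structC_ne hA hB hAB,
      structC_ne hB hA (Ne.symm hAB)]
    have ha : ε B A = -ε A B := eps_antisym hε A B
    rcases (hε.1 A B hA hB hAB).1 with h | h <;> rw [ha, h] <;> norm_num
  by_cases hAD : A = D
  · subst hAD
    obtain rfl : B = C := by
      have h0 : A + A = 0 := vadd_self A
      rw [h0] at hsum'
      exact vzero B C hsum'.symm
    rw [structC_same _ hA, structC_same _ hB, structC_ne hA hB hAB,
      structC_ne hB hA (Ne.symm hAB)]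
    have ha : ε B A = -ε A B := eps_antisym hε A B
    rcases (hε.1 A B hA hB hAB).1 with h | h <;> rw [ha, h] <;> norm_num
  have hBC : B ≠ C := fun h => hAD (vzero A D (by rw [hsum', h]; exact vadd_self C))
  have hBD : B ≠ D := fun h => hAC (vzero A C (by rw [hsum, h]; exact vadd_self D))
  have hK := hK2 A B C D hA hB hC hD hAB hAC hAD hBC hBD hCD hsum
  rw [structC_ne hA hC hAC, structC_ne hB hD hBD, structC_ne hA hD hAD,
    structC_ne hB hC hBC]
  calc (ε A C : 𝔽) * (ε B D : 𝔽) + (ε A D : 𝔽) * (ε B C : 𝔽)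
      = ((ε A C * ε B D + ε A D * ε B C : ℤ) : 𝔽) := by push_cast; ring
    _ = 0 := by rw [hK]; norm_num

end Aux2

section Aux3

variable {𝔽 : Type*} [Field 𝔽]

set_option maxHeartbeats 1000000 in
/-- The main algebraic computation: the composition identity for a system of
structure constants with the cancellation property. -/
lemma comp_main (c : V → V → 𝔽) (Z W : V → 𝔽)
    (hsq : ∀ P Q : V, c P Q ^ 2 = 1)
    (K : ∀ A B C D : V, A ≠ B → A + C = B + D → c A C * c B D + c A D * c B C = 0) :
    ∑ X : V, (∑ Y : V, c Y (X + Y) * Z Y * W (X + Y)) ^ 2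
      = (∑ X : V, Z X ^ 2) * (∑ X : V, W X ^ 2) := by
  set t : V → V → 𝔽 := fun X Y => c Y (X + Y) * Z Y * W (X + Y) with ht
  have tsq : ∀ X Y : V, t X Y * t X Y = Z Y ^ 2 * W (X + Y) ^ 2 := by
    intro X Y
    calc t X Y * t X Y = c Y (X + Y) ^ 2 * (Z Y ^ 2 * W (X + Y) ^ 2) := by
          simp only [ht]; ring
      _ = Z Y ^ 2 * W (X + Y) ^ 2 := by rw [hsq, one_mul]
  have zero_part : ∑ X : V, ∑ Y : V, ∑ Y' : V,
      (if Y = Y' then 0 else t X Y * t X Y') = 0 := by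
    have hrw : ∑ X : V, ∑ Y : V, ∑ Y' : V, (if Y = Y' then 0 else t X Y * t X Y')
        = ∑ p : V × V × V, (if p.2.1 = p.2.2 then 0 else t p.1 p.2.1 * t p.1 p.2.2) := by
      simp only [Fintype.sum_prod_type]
    rw [hrw]
    refine Finset.sum_ninvolution
      (fun p => (p.1 + p.2.1 + p.2.2, p.2.1, p.2.2)) ?_ ?_ (fun _ => Finset.mem_univ _) ?_
    · rintro ⟨X, Y, Y'⟩
      by_cases hne : Y = Y'
      · simp [hne]
      · simp only [hne, if_false]
        have hYX : Y + (X + Y) = Y' + (X + Y') := by rw [vsum, vsum]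
        have hK := K Y Y' (X + Y) (X + Y') hne hYX
        have h1 : X + Y + Y' + Y = X + Y' := vfour X Y Y'
        have h2 : X + Y + Y' + Y' = X + Y := by
          rw [show X + Y + Y' + Y' = X + Y + (Y' + Y') by rw [add_assoc], vadd_self, add_zero]
        simp only [ht, h1, h2]
        ring_nf
        linear_combination (Z Y * Z Y' * W (X + Y) * W (X + Y')) * hK
    · rintro ⟨X, Y, Y'⟩ hf
      have hne : Y ≠ Y' := by
        intro h; exact hf (by simp [h])
      intro h
      have := congrArg Prod.fst h
      simp only at this
      exact hne (vne3 X Y Y' this)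
    · rintro ⟨X, Y, Y'⟩
      show (X + Y + Y' + Y + Y', Y, Y') = (X, Y, Y')
      rw [vfive]
  calc ∑ X : V, (∑ Y : V, t X Y) ^ 2
      = ∑ X : V, ∑ Y : V, ∑ Y' : V, t X Y * t X Y' := by
        refine Finset.sum_congr rfl fun X _ => ?_
        rw [sq, Finset.sum_mul_sum]
    _ = ∑ X : V, ∑ Y : V, (Z Y ^ 2 * W (X + Y) ^ 2
          + ∑ Y' : V, (if Y = Y' then 0 else t X Y * t X Y')) := by
        refine Finset.sum_congr rfl fun X _ => Finset.sum_congr rfl fun Y _ => ?_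
        have hsplit : ∀ Y' : V, t X Y * t X Y' =
            (if Y = Y' then t X Y * t X Y' else 0)
              + (if Y = Y' then 0 else t X Y * t X Y') := by
          intro Y'; split <;> ring
        rw [Finset.sum_congr rfl fun Y' _ => hsplit Y', Finset.sum_add_distrib,
          Finset.sum_ite_eq Finset.univ Y (fun Y' => t X Y * t X Y')]
        simp [tsq X Y]
    _ = (∑ X : V, ∑ Y : V, Z Y ^ 2 * W (X + Y) ^ 2)
          + ∑ X : V, ∑ Y : V, ∑ Y' : V, (if Y = Y' then 0 else t X Y * t X Y') := by
        simp [Finset.sum_add_distrib]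
    _ = ∑ X : V, ∑ Y : V, Z Y ^ 2 * W (X + Y) ^ 2 := by rw [zero_part, add_zero]
    _ = (∑ X : V, Z X ^ 2) * (∑ X : V, W X ^ 2) := by
        rw [Finset.sum_comm, Finset.sum_mul]
        refine Finset.sum_congr rfl fun Y _ => ?_
        rw [← Finset.mul_sum]
        congr 1
        exact Fintype.sum_equiv (Equiv.addRight Y) _ _ (fun X => rfl)

lemma comp_of_key {ε : V → V → ℤ} (hε : IsMulFactor ε)
    (K : ∀ A B C D : V, A ≠ B → A + C = B + D →
      structC 𝔽 (fun _ => 1) ε A C * structC 𝔽 (fun _ => 1) ε B D +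
        structC 𝔽 (fun _ => 1) ε A D * structC 𝔽 (fun _ => 1) ε B C = 0) :
    IsCompAlg 𝔽 (fun _ => 1) ε := by
  intro Z W
  have hsq : ∀ P Q : V, structC 𝔽 (fun _ => 1) ε P Q ^ 2 = 1 := by
    intro P Q
    by_cases h1 : P = 0 ∨ Q = 0
    · rw [show structC 𝔽 (fun _ => 1) ε P Q = 1 by simp [structC, h1]]; ring
    · push_neg at h1
      by_cases h2 : P = Q
      · subst h2; rw [structC_same _ h1.1]; norm_num
      · rw [structC_ne h1.1 h1.2 h2]
        rcases (hε.1 P Q h1.1 h1.2 h2).1 with h | h <;> rw [h] <;> norm_num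
  have hnorm : ∀ U : V → 𝔽, octNorm 𝔽 (fun _ => 1) U = ∑ X : V, U X ^ 2 := by
    intro U; unfold octNorm; simp
  rw [hnorm, hnorm, hnorm]
  simp only [octMul]
  exact comp_main _ Z W hsq K

end Aux3

section Final

variable {ε : V → V → ℤ}

lemma mulFactor_flip (hε : IsMulFactor ε) : IsMulFactor (fun P Q => ε Q P) := by
  constructor
  · intro P Q hP hQ hPQ
    obtain ⟨h1, h2⟩ := hε.1 Q P hQ hP (Ne.symm hPQ)
    exact ⟨h1, by simpa using (hε.1 P Q hP hQ hPQ).2.symm ▸ by omega⟩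
  · intro P Q h
    exact hε.2 Q P (by tauto)

lemma future_flip (hε : IsMulFactor ε) {P : V} (hP : P ≠ 0) :
    Future (fun P Q => ε Q P) P = Past ε P := by
  ext Q
  simp only [Future, Past, Set.mem_setOf_eq, and_congr_right_iff]
  intro hQ hQP
  have := eps_antisym hε P Q
  omega

end Final

/-- if every future is a line, or every past is a line, then `(O_F, 1, ε)`
is a composition algebra. -/
theorem stmt_15 (𝔽 : Type*) [Field 𝔽] (hchar : (2 : 𝔽) ≠ 0)
    (ε : V → V → ℤ) (hε : IsMulFactor ε)
    (h : (∀ P : V, P ≠ 0 → IsLine (Future ε P)) ∨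
         (∀ P : V, P ≠ 0 → IsLine (Past ε P))) :
    IsCompAlg 𝔽 (fun _ => 1) ε := by
  rcases h with hf | hp
  · exact comp_of_key hε
      (keyC hε (K1_of_futures hε hf) (K2_of_futures hε hf))
  · set ε' : V → V → ℤ := fun P Q => ε Q P with hε'def
    have hε' : IsMulFactor ε' := mulFactor_flip hε
    have hf' : ∀ P : V, P ≠ 0 → IsLine (Future ε' P) := by
      intro P hP
      rw [hε'def, future_flip hε hP]
      exact hp P hP
    have hK1' := K1_of_futures hε' hf'
    have hK2' := K2_of_futures hε' hf'
    have hK1 : ∀ B C D : V, B ≠ 0 → C ≠ 0 → D ≠ 0 → B ≠ C → B ≠ D → C ≠ D →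
        B + C + D = 0 → ε B C + ε B D = 0 := by
      intro B C D hB hC hD hBC hBD hCD hsum
      have := hK1' B C D hB hC hD hBC hBD hCD hsum
      have h1 := eps_antisym hε B C
      have h2 := eps_antisym hε B D
      simp only [hε'def] at this
      omega
    have hK2 : ∀ A B C D : V, A ≠ 0 → B ≠ 0 → C ≠ 0 → D ≠ 0 →
        A ≠ B → A ≠ C → A ≠ D → B ≠ C → B ≠ D → C ≠ D → A + C = B + D →
        ε A C * ε B D + ε A D * ε B C = 0 := by
      intro A B C D hA hB hC hD hAB hAC hAD hBC hBD hCD hsum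
      have := hK2' A B C D hA hB hC hD hAB hAC hAD hBC hBD hCD hsum
      simp only [hε'def] at this
      rw [eps_antisym hε A C, eps_antisym hε B D, eps_antisym hε A D,
        eps_antisym hε B C] at this
      linarith [this]
    exact comp_of_key hε (keyC hε hK1 hK2)
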